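/- Let k = s(q,n) and k̄ = s(q̄,n̄) be two distinct quasi-resonances, with γ̃*_q ≤ γ̃*_{q̄}. Set Z = (ε*_{k̄}/ε*_k)^{1/4} and W = (γ̃*_{q̄}/γ̃*_q)^{1/2} ≥ 1. Then the functions g*_k and g*_{k̄} are not identical, they coincide at no more than one point ε > 0, a coincidence point exists if and only if Z < 1/W or Z > W, and in that case it is unique, transverse (the derivatives of g*_k and g*_{k̄} differ there), and located at ε = ε*_k·(Z(WZ−1)/(Z−W))². -/

import Mathlib

open Real Filter Matrix

noncomputable section

/-- Orbit of the Gauss map `g(x) = {1/x}` starting at `Ω`: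
`x₀ = Ω`, `x_{j+1} = g(x_j)`. -/
def gaussOrbit (Ω : ℝ) : ℕ → ℝ
  | 0 => Ω
  | j + 1 => Int.fract (1 / gaussOrbit Ω j)

/-- `cfA Ω j` is the partial quotient `a_{j+1}` of the continued fraction of `Ω`. -/
def cfA (Ω : ℝ) (j : ℕ) : ℤ := ⌊1 / gaussOrbit Ω j⌋

/-- The matrix `[[a, 1], [1, 0]]`. -/
def Acf (a : ℤ) : Matrix (Fin 2) (Fin 2) ℤ := !![a, 1; 1, 0]

/-- The product `A₁ ⋯ A_m` with `A_i = [[a_i, 1], [1, 0]]`. -/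
def cfMatProd (Ω : ℝ) (m : ℕ) : Matrix (Fin 2) (Fin 2) ℤ :=
  ((List.range m).map fun i => Acf (cfA Ω i)).prod

/-- `cfQ Ω (j+1) = q_j`:  `q₋₁ = 0`, `q₀ = 1`, `q_j = a_j q_{j-1} + q_{j-2}`. -/
def cfQ (Ω : ℝ) : ℕ → ℤ
  | 0 => 0
  | 1 => 1
  | j + 2 => cfA Ω j * cfQ Ω (j + 1) + cfQ Ω j

/-- `cfP Ω (j+1) = p_j`:  `p₋₁ = 1`, `p₀ = 0`, `p_j = a_j p_{j-1} + p_{j-2}`. -/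
def cfP (Ω : ℝ) : ℕ → ℤ
  | 0 => 1
  | 1 => 0
  | j + 2 => cfA Ω j * cfP Ω (j + 1) + cfP Ω j

/-- The vector convergent `w(j) = (q_j, p_j)`. -/
def wconv (Ω : ℝ) (j : ℕ) : Fin 2 → ℤ := ![cfQ Ω (j + 1), cfP Ω (j + 1)]

/-- The resonant convergent `v(j) = (−p_j, q_j)`. -/
def vconv (Ω : ℝ) (j : ℕ) : Fin 2 → ℤ := ![-cfP Ω (j + 1), cfQ Ω (j + 1)]

/-- A quadratic irrational number. -/
def IsQuadraticIrrational (Ω : ℝ) : Prop :=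
  Irrational Ω ∧ ∃ A B C : ℤ, A ≠ 0 ∧ (A : ℝ) * Ω ^ 2 + (B : ℝ) * Ω + (C : ℝ) = 0

end
noncomputable section

/-- `⟨k, ω⟩ = k₁ + k₂ Ω` for `ω = (1, Ω)`. -/
def pairω (Ω : ℝ) (k : Fin 2 → ℤ) : ℝ := (k 0 : ℝ) + (k 1 : ℝ) * Ω

/-- `|k|₁ = |k₁| + |k₂|`. -/
def norm1 (k : Fin 2 → ℤ) : ℤ := |k 0| + |k 1|

/-- `p⁰(q)`: the integer nearest to `qΩ`. -/
def p0 (Ω : ℝ) (q : ℤ) : ℤ := round ((q : ℝ) * Ω)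

/-- `k⁰(q) = (−p⁰(q), q)`. -/
def kzero (Ω : ℝ) (q : ℤ) : Fin 2 → ℤ := ![-p0 Ω q, q]

/-- The set `A` of quasi-resonances: vectors `k⁰(q)`, `q ≥ 1`, with `|⟨k,ω⟩| < 1/2`. -/
def inA (Ω : ℝ) (k : Fin 2 → ℤ) : Prop :=
  ∃ q : ℤ, 1 ≤ q ∧ k = kzero Ω q ∧ |pairω Ω k| < 1 / 2

/-- A quasi-resonance `k` is primitive if `U⁻¹k` is not a quasi-resonance. -/
def PrimitiveVec (Ω : ℝ) (U : Matrix (Fin 2) (Fin 2) ℤ) (k : Fin 2 → ℤ) : Prop :=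
  inA Ω k ∧ ¬inA Ω (U⁻¹.mulVec k)

/-- A primitive integer `q ≥ 1`. -/
def PrimitiveInt (Ω : ℝ) (U : Matrix (Fin 2) (Fin 2) ℤ) (q : ℤ) : Prop :=
  1 ≤ q ∧ PrimitiveVec Ω U (kzero Ω q)

/-- The resonant sequence `s(q, n) = Uⁿ k⁰(q)`. -/
def sres (Ω : ℝ) (U : Matrix (Fin 2) (Fin 2) ℤ) (q : ℤ) (n : ℕ) : Fin 2 → ℤ :=
  (U ^ n).mulVec (kzero Ω q)

/-- `U = σ (T⁻¹)ᵀ` with `σ = det T = (−1)^m` and `T = A₁⋯A_m`. -/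
def Umat (Ω : ℝ) (m : ℕ) : Matrix (Fin 2) (Fin 2) ℤ :=
  ((-1 : ℤ) ^ m) • ((cfMatProd Ω m)⁻¹)ᵀ

/-- The numerator `γ_k = |⟨k,ω⟩| · |k|₁`. -/
def gammaK (Ω : ℝ) (k : Fin 2 → ℤ) : ℝ := |pairω Ω k| * (norm1 k : ℝ)

/-- `K_q = |z_q|(1+Ω)/|c+bΩ²|`, where `z_q = cq + bpΩ`, `p = p⁰(q)`,
and `b, c` are the off-diagonal entries of `T = A₁⋯A_m = [[a,b],[c,d]]`. -/
def KqD (Ω : ℝ) (m : ℕ) (q : ℤ) : ℝ :=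
  |(cfMatProd Ω m 1 0 : ℝ) * (q : ℝ) + (cfMatProd Ω m 0 1 : ℝ) * (p0 Ω q : ℝ) * Ω| * (1 + Ω) /
    |(cfMatProd Ω m 1 0 : ℝ) + (cfMatProd Ω m 0 1 : ℝ) * Ω ^ 2|

/-- The limit numerator `γ*_q = |r_q| K_q` with `r_q = qΩ − p⁰(q)`. -/
def gammaStarQ (Ω : ℝ) (m : ℕ) (q : ℤ) : ℝ :=
  |(q : ℝ) * Ω - (p0 Ω q : ℝ)| * KqD Ω m q

end
noncomputable section

/-- `G(ε; X, Y) = (√Y/2)((ε/X)^{1/4} + (X/ε)^{1/4})`. -/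
def Gfun (ε X Y : ℝ) : ℝ :=
  Real.sqrt Y / 2 * ((ε / X) ^ ((1 : ℝ) / 4) + (X / ε) ^ ((1 : ℝ) / 4))

/-- Normalized limit numerator `γ̃*_q = γ*_q / γ*` with `γ* = γ*_{q̂}`. -/
def tgam (Ω : ℝ) (m : ℕ) (qh q : ℤ) : ℝ := gammaStarQ Ω m q / gammaStarQ Ω m qh

/-- `D₀ = (π γ* / (2ρ))²`. -/
def D0 (Ω : ℝ) (m : ℕ) (ρ : ℝ) (qh : ℤ) : ℝ := (π * gammaStarQ Ω m qh / (2 * ρ)) ^ 2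

/-- `ε*_{s(q,n)} = D₀ (γ̃*_q)² / (K_q⁴ λ^{4n})`. -/
def epsStar (Ω : ℝ) (m : ℕ) (ρ lam : ℝ) (qh q : ℤ) (n : ℕ) : ℝ :=
  D0 Ω m ρ qh * tgam Ω m qh q ^ 2 / (KqD Ω m q ^ 4 * lam ^ (4 * n))

/-- `g*_{s(q,n)}(ε) = G(ε; ε*_{s(q,n)}, γ̃*_q)`. -/
def gstarF (Ω : ℝ) (m : ℕ) (ρ lam : ℝ) (qh q : ℤ) (n : ℕ) (ε : ℝ) : ℝ :=
  Gfun ε (epsStar Ω m ρ lam qh q n) (tgam Ω m qh q)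

/-- `h₁(ε)`: the infimum of `g*_k(ε)` over essential quasi-resonances `k = s(q,n)`. -/
def h1fun (Ω : ℝ) (m : ℕ) (ρ lam : ℝ) (qh : ℤ) (ε : ℝ) : ℝ :=
  sInf {y : ℝ | ∃ q : ℤ, ∃ n : ℕ, PrimitiveInt Ω (Umat Ω m) q ∧
    Int.gcd (kzero Ω q 0) (kzero Ω q 1) = 1 ∧ y = gstarF Ω m ρ lam qh q n ε}

end

/-! Writing `u = (ε/ε*_k)^{1/4}`, one has `g*_k = (√γ̃*_q/2)(u + 1/u)` and
`g*_{k̄} = (W√γ̃*_q/2)(u/Z + Z/u)`, so a coincidence point is exactly a positive root of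
`u²(Z - W) = Z(WZ - 1)`; there is at most one, and it exists iff `Z(WZ - 1)/(Z - W) > 0`.
At such a root the difference of the derivatives is a nonzero multiple of
`u²(Z - W) + Z(WZ - 1) = 2Z(WZ - 1)`, which can only vanish when `Z = W = 1`.

That degenerate case is excluded because `(ε*_k, γ̃*_q)` determines `k = s(q,n)`: since
`⟨s(q,n), ω⟩ = (±1/λ)ⁿ r_q` and `γ*_q = |r_q| K_q`, both data together fix `|⟨k, ω⟩|`,
and as `Ω` is irrational and all `s(q,n)` have positive second coordinate, `|⟨k, ω⟩|`
fixes `k`. -/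

lemma eq_mul_rpow_quarter_pow_four {a b : ℝ} (ha : 0 < a) (hb : 0 ≤ b) :
    b = a * ((b / a) ^ (1 / 4 : ℝ)) ^ 4 := by
  rw [show (1 / 4 : ℝ) = ((4 : ℕ) : ℝ)⁻¹ by norm_num,
    Real.rpow_inv_natCast_pow (div_nonneg hb ha.le) four_ne_zero, mul_div_cancel₀ _ ha.ne']

lemma eq_mul_sqrt_div_sq {a b : ℝ} (ha : 0 < a) (hb : 0 ≤ b) : b = a * √(b / a) ^ 2 := by
  rw [Real.sq_sqrt (div_nonneg hb ha.le), mul_div_cancel₀ _ ha.ne']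

section Profile

variable {ε X Y Z W : ℝ}

lemma hasDerivAt_Gfun (hε : ε ≠ 0) (hX : X ≠ 0) :
    HasDerivAt (fun e => Gfun e X Y)
      (√Y / (8 * ε) * ((ε / X) ^ (1 / 4 : ℝ) - (X / ε) ^ (1 / 4 : ℝ))) ε := by
  have hu : HasDerivAt (fun e => (e / X) ^ (1 / 4 : ℝ))
      (1 / X * (1 / 4) * (ε / X) ^ (1 / 4 - 1 : ℝ)) ε :=
    ((hasDerivAt_id' ε).div_const X).rpow_const (Or.inl (div_ne_zero hε hX))
  have hv : HasDerivAt (fun e => (X / e) ^ (1 / 4 : ℝ))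
      ((0 * ε - X * 1) / ε ^ 2 * (1 / 4) * (X / ε) ^ (1 / 4 - 1 : ℝ)) ε :=
    ((hasDerivAt_const ε X).div (hasDerivAt_id' ε) hε).rpow_const (Or.inl (div_ne_zero hX hε))
  refine ((hu.add hv).const_mul (√Y / 2)).congr_deriv ?_
  rw [Real.rpow_sub_one (div_ne_zero hε hX), Real.rpow_sub_one (div_ne_zero hX hε)]
  field_simp
  ring

lemma rpow_quarter_inv_div (h : 0 ≤ ε / X) :
    (X / ε) ^ (1 / 4 : ℝ) = ((ε / X) ^ (1 / 4 : ℝ))⁻¹ := by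
  rw [← Real.inv_rpow h, inv_div]

lemma rpow_quarter_sq {a : ℝ} (ha : 0 ≤ a) : (a ^ (1 / 4 : ℝ)) ^ 2 = √a := by
  rw [Real.sqrt_eq_rpow, ← Real.rpow_natCast, ← Real.rpow_mul ha]
  norm_num

lemma rpow_quarter_div_mul_pow_four (h : 0 ≤ ε / X) (hZ : 0 ≤ Z) :
    (ε / (X * Z ^ 4)) ^ (1 / 4 : ℝ) = (ε / X) ^ (1 / 4 : ℝ) / Z := by
  have hZ4 : (Z ^ 4) ^ (1 / 4 : ℝ) = Z := by
    rw [show (1 / 4 : ℝ) = ((4 : ℕ) : ℝ)⁻¹ by norm_num,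
      Real.pow_rpow_inv_natCast hZ four_ne_zero]
  rw [← div_div, Real.div_rpow h (by positivity), hZ4]

lemma Gfun_eq_of_nonneg (h : 0 ≤ ε / X) :
    Gfun ε X Y = √Y / 2 * ((ε / X) ^ (1 / 4 : ℝ) + ((ε / X) ^ (1 / 4 : ℝ))⁻¹) := by
  rw [Gfun, rpow_quarter_inv_div h]

lemma Gfun_mul_pow_four_mul_sq (h : 0 ≤ ε / X) (hZ : 0 ≤ Z) (hW : 0 ≤ W) :
    Gfun ε (X * Z ^ 4) (Y * W ^ 2) = √Y * W / 2 *
      ((ε / X) ^ (1 / 4 : ℝ) / Z + ((ε / X) ^ (1 / 4 : ℝ) / Z)⁻¹) := by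
  have h' : 0 ≤ ε / (X * Z ^ 4) := by
    rw [← div_div]; positivity
  rw [Gfun_eq_of_nonneg h', rpow_quarter_div_mul_pow_four h hZ,
    Real.sqrt_mul' _ (sq_nonneg W), Real.sqrt_sq hW]

lemma deriv_Gfun (hε : 0 < ε) (hX : 0 < X) :
    deriv (fun e => Gfun e X Y) ε =
      √Y / (8 * ε) * ((ε / X) ^ (1 / 4 : ℝ) - ((ε / X) ^ (1 / 4 : ℝ))⁻¹) := by
  rw [(hasDerivAt_Gfun hε.ne' hX.ne').deriv, rpow_quarter_inv_div (div_pos hε hX).le]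

lemma deriv_Gfun_mul_pow_four_mul_sq (hε : 0 < ε) (hX : 0 < X) (hZ : 0 < Z) (hW : 0 ≤ W) :
    deriv (fun e => Gfun e (X * Z ^ 4) (Y * W ^ 2)) ε = √Y * W / (8 * ε) *
      ((ε / X) ^ (1 / 4 : ℝ) / Z - ((ε / X) ^ (1 / 4 : ℝ) / Z)⁻¹) := by
  rw [deriv_Gfun hε (by positivity), rpow_quarter_div_mul_pow_four (by positivity) hZ.le,
    Real.sqrt_mul' _ (sq_nonneg W), Real.sqrt_sq hW]

lemma Gfun_eq_Gfun_mul_pow_four_mul_sq_iff (hε : 0 < ε) (hX : 0 < X) (hY : 0 < Y)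
    (hZ : 0 < Z) (hW : 0 ≤ W) :
    Gfun ε X Y = Gfun ε (X * Z ^ 4) (Y * W ^ 2) ↔ √(ε / X) * (Z - W) = Z * (W * Z - 1) := by
  have hεX : 0 ≤ ε / X := by positivity
  have hu : 0 < (ε / X) ^ (1 / 4 : ℝ) := by positivity
  set u := (ε / X) ^ (1 / 4 : ℝ)
  have hsq : √(ε / X) = u ^ 2 := (rpow_quarter_sq hεX).symm
  have key : √Y / 2 * (u + u⁻¹) - √Y * W / 2 * (u / Z + (u / Z)⁻¹) =
      √Y / (2 * u * Z) * (u ^ 2 * (Z - W) - Z * (W * Z - 1)) := by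
    field_simp
    ring
  have hcoef : √Y / (2 * u * Z) ≠ 0 := by positivity
  rw [Gfun_eq_of_nonneg hεX, Gfun_mul_pow_four_mul_sq hεX hZ.le hW, ← sub_eq_zero, key,
    mul_eq_zero, or_iff_right hcoef, sub_eq_zero, hsq]

lemma ne_and_mul_ne_one_of_coincidence {c : ℝ} (hc : 0 < c) (hZ : 0 < Z)
    (hZW : ¬(Z = 1 ∧ W = 1)) (h : c * (Z - W) = Z * (W * Z - 1)) : Z ≠ W ∧ W * Z ≠ 1 := by
  have hne : Z ≠ W := by
    rintro rfl
    have hZ1 : Z = 1 := by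
      have : Z * ((Z - 1) * (Z + 1)) = 0 := by linear_combination -h
      rcases mul_eq_zero.mp this with h0 | h0
      · exact absurd h0 hZ.ne'
      · rcases mul_eq_zero.mp h0 with h1 | h1 <;> linarith
    exact hZW ⟨hZ1, hZ1⟩
  refine ⟨hne, fun h1 => hne ?_⟩
  rw [h1, sub_self, mul_zero, mul_eq_zero] at h
  exact sub_eq_zero.mp (h.resolve_left hc.ne')

lemma sqrt_div_eq_of_Gfun_eq (hε : 0 < ε) (hX : 0 < X) (hY : 0 < Y) (hZ : 0 < Z) (hW : 0 ≤ W)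
    (hZW : ¬(Z = 1 ∧ W = 1)) (h : Gfun ε X Y = Gfun ε (X * Z ^ 4) (Y * W ^ 2)) :
    √(ε / X) = Z * (W * Z - 1) / (Z - W) := by
  rw [Gfun_eq_Gfun_mul_pow_four_mul_sq_iff hε hX hY hZ hW] at h
  have hne := (ne_and_mul_ne_one_of_coincidence (by positivity) hZ hZW h).1
  rw [eq_div_iff (sub_ne_zero.mpr hne), h]

lemma eq_of_Gfun_eq_Gfun (hε : 0 < ε) (hX : 0 < X) (hY : 0 < Y) (hZ : 0 < Z) (hW : 0 ≤ W)
    (hZW : ¬(Z = 1 ∧ W = 1)) (h : Gfun ε X Y = Gfun ε (X * Z ^ 4) (Y * W ^ 2)) :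
    ε = X * (Z * (W * Z - 1) / (Z - W)) ^ 2 := by
  rw [← sqrt_div_eq_of_Gfun_eq hε hX hY hZ hW hZW h, Real.sq_sqrt (by positivity)]
  field_simp

lemma coincidence_ratio_pos_iff (hZ : 0 < Z) (hW : 1 ≤ W) :
    0 < Z * (W * Z - 1) / (Z - W) ↔ Z < 1 / W ∨ W < Z := by
  rw [lt_div_iff₀ (by positivity : (0 : ℝ) < W), div_pos_iff]
  constructor
  · rintro (⟨h1, h2⟩ | ⟨h1, _⟩)
    · exact Or.inr (by linarith)
    · exact Or.inl (by nlinarith)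
  · rintro (h | h)
    · exact Or.inr ⟨by nlinarith, by nlinarith⟩
    · have : W * W < W * Z := mul_lt_mul_of_pos_left h (by linarith)
      exact Or.inl ⟨mul_pos hZ (by nlinarith), by linarith⟩

lemma exists_Gfun_eq_Gfun_iff (hX : 0 < X) (hY : 0 < Y) (hZ : 0 < Z) (hW : 1 ≤ W)
    (hZW : ¬(Z = 1 ∧ W = 1)) :
    (∃ ε, 0 < ε ∧ Gfun ε X Y = Gfun ε (X * Z ^ 4) (Y * W ^ 2)) ↔ Z < 1 / W ∨ W < Z := by
  rw [← coincidence_ratio_pos_iff hZ hW]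
  constructor
  · rintro ⟨ε, hε, h⟩
    rw [← sqrt_div_eq_of_Gfun_eq hε hX hY hZ (by linarith) hZW h]
    positivity
  · intro hR
    set R := Z * (W * Z - 1) / (Z - W) with hR_def
    have hne : Z - W ≠ 0 := fun h0 => by simp [hR_def, h0] at hR
    refine ⟨X * R ^ 2, by positivity, ?_⟩
    rw [Gfun_eq_Gfun_mul_pow_four_mul_sq_iff (by positivity) hX hY hZ (by linarith),
      mul_div_cancel_left₀ _ hX.ne', Real.sqrt_sq hR.le, hR_def, div_mul_cancel₀ _ hne]

lemma deriv_Gfun_ne_of_Gfun_eq (hε : 0 < ε) (hX : 0 < X) (hY : 0 < Y) (hZ : 0 < Z)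
    (hW : 0 ≤ W) (hZW : ¬(Z = 1 ∧ W = 1)) (h : Gfun ε X Y = Gfun ε (X * Z ^ 4) (Y * W ^ 2)) :
    deriv (fun e => Gfun e X Y) ε ≠ deriv (fun e => Gfun e (X * Z ^ 4) (Y * W ^ 2)) ε := by
  rw [Gfun_eq_Gfun_mul_pow_four_mul_sq_iff hε hX hY hZ hW] at h
  have hWZ := (ne_and_mul_ne_one_of_coincidence (by positivity) hZ hZW h).2
  have hu : 0 < (ε / X) ^ (1 / 4 : ℝ) := by positivity
  rw [← rpow_quarter_sq (by positivity)] at h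
  rw [deriv_Gfun hε hX, deriv_Gfun_mul_pow_four_mul_sq hε hX hZ hW, ← sub_ne_zero]
  set u := (ε / X) ^ (1 / 4 : ℝ)
  have key : √Y / (8 * ε) * (u - u⁻¹) - √Y * W / (8 * ε) * (u / Z - (u / Z)⁻¹) =
      √Y / (8 * ε * u * Z) * (u ^ 2 * (Z - W) + Z * (W * Z - 1)) := by
    field_simp
    ring
  rw [key, h, ← two_mul]
  exact mul_ne_zero (by positivity)
    (mul_ne_zero two_ne_zero (mul_ne_zero hZ.ne' (sub_ne_zero.mpr hWZ)))

end Profile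

section QuasiResonances

variable {Ω : ℝ} {m : ℕ}

lemma gaussOrbit_mem (hirr : Irrational Ω) (h0 : 0 < Ω) (h1 : Ω < 1) (j : ℕ) :
    Irrational (gaussOrbit Ω j) ∧ gaussOrbit Ω j ∈ Set.Ioo 0 1 := by
  induction j with
  | zero => exact ⟨hirr, h0, h1⟩
  | succ j ih =>
    have hinv : Irrational (1 / gaussOrbit Ω j) := by
      rw [one_div]; exact ih.1.inv
    exact ⟨hinv.sub_intCast _, Int.fract_pos.mpr (hinv.ne_int _), Int.fract_lt_one _⟩

lemma one_le_cfA (hirr : Irrational Ω) (h0 : 0 < Ω) (h1 : Ω < 1) (j : ℕ) : 1 ≤ cfA Ω j := by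
  obtain ⟨-, hpos, hlt⟩ := gaussOrbit_mem hirr h0 h1 j
  exact Int.le_floor.mpr (by simpa using (one_le_one_div hpos hlt.le))

lemma cfMatProd_succ :
    cfMatProd Ω (m + 1) = cfMatProd Ω m * Acf (cfA Ω m) := by
  simp [cfMatProd, List.range_succ]

lemma det_cfMatProd : (cfMatProd Ω m).det = (-1) ^ m := by
  induction m with
  | zero => simp [cfMatProd]
  | succ m ih =>
    rw [cfMatProd_succ, Matrix.det_mul, ih, Acf, Matrix.det_fin_two_of, pow_succ]
    ring

lemma cfMatProd_entries (hirr : Irrational Ω) (h0 : 0 < Ω) (h1 : Ω < 1) (hm : 1 ≤ m) :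
    1 ≤ cfMatProd Ω m 0 0 ∧ 1 ≤ cfMatProd Ω m 0 1 ∧ 1 ≤ cfMatProd Ω m 1 0 ∧
      0 ≤ cfMatProd Ω m 1 1 := by
  induction m, hm using Nat.le_induction with
  | base =>
    have := one_le_cfA hirr h0 h1 0
    refine ⟨?_, ?_, ?_, ?_⟩ <;> simp [cfMatProd, Acf, this]
  | succ m _ ih =>
    obtain ⟨e00, e01, e10, e11⟩ := ih
    have ha := one_le_cfA hirr h0 h1 m
    simp only [cfMatProd_succ, Acf, Matrix.mul_apply, Fin.sum_univ_two, Matrix.of_apply,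
      Matrix.cons_val', Matrix.cons_val_zero, Matrix.cons_val_one, Matrix.empty_val',
      Matrix.cons_val_fin_one]
    refine ⟨?_, ?_, ?_, ?_⟩ <;> nlinarith

/-- `U = σ (T⁻¹)ᵀ` is the cofactor matrix of `T`, because `σ = det T = ±1`. -/
lemma Umat_eq :
    Umat Ω m =
      !![cfMatProd Ω m 1 1, -cfMatProd Ω m 1 0; -cfMatProd Ω m 0 1, cfMatProd Ω m 0 0] := by
  have hσ : ((-1 : ℤ) ^ m) * (-1) ^ m = 1 := by rw [← mul_pow]; norm_num
  have hinv : (cfMatProd Ω m)⁻¹ = ((-1 : ℤ) ^ m) • (cfMatProd Ω m).adjugate := by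
    apply Matrix.inv_eq_right_inv
    rw [Matrix.mul_smul, Matrix.mul_adjugate, det_cfMatProd, smul_smul, hσ, one_smul]
  rw [Umat, hinv, Matrix.transpose_smul, smul_smul, hσ, one_smul, Matrix.adjugate_fin_two]
  ext i j
  fin_cases i <;> fin_cases j <;> rfl

lemma p0_nonneg (h0 : 0 < Ω) {q : ℤ} (hq : 0 ≤ q) : 0 ≤ p0 Ω q := by
  rw [p0, round_eq, Int.floor_nonneg]
  have : (0 : ℝ) ≤ q := by exact_mod_cast hq
  positivity

lemma sres_succ (U : Matrix (Fin 2) (Fin 2) ℤ) (q : ℤ) (n : ℕ) :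
    sres Ω U q (n + 1) = U *ᵥ sres Ω U q n := by
  rw [sres, sres, pow_succ', Matrix.mulVec_mulVec]

lemma sres_signs (hirr : Irrational Ω) (h0 : 0 < Ω) (h1 : Ω < 1) (hm : 1 ≤ m) {q : ℤ}
    (hq : 1 ≤ q) (n : ℕ) :
    sres Ω (Umat Ω m) q n 0 ≤ 0 ∧ 1 ≤ sres Ω (Umat Ω m) q n 1 := by
  obtain ⟨e00, e01, e10, e11⟩ := cfMatProd_entries hirr h0 h1 hm
  induction n with
  | zero =>
    simp only [sres, pow_zero, Matrix.one_mulVec, kzero, Matrix.cons_val_zero,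
      Matrix.cons_val_one, Matrix.cons_val_fin_one, Left.neg_nonpos_iff]
    exact ⟨p0_nonneg h0 (by omega), hq⟩
  | succ n ih =>
    obtain ⟨ih0, ih1⟩ := ih
    rw [sres_succ]
    set v := sres Ω (Umat Ω m) q n
    simp only [Umat_eq, Matrix.mulVec, dotProduct, Fin.sum_univ_two, Matrix.of_apply,
      Matrix.cons_val', Matrix.cons_val_zero, Matrix.cons_val_one, Matrix.empty_val',
      Matrix.cons_val_fin_one]
    constructor <;> nlinarith

/-- Because `⟨U v, ω⟩ = σ ⟨v, T⁻¹ ω⟩` and `T ω = λ ω`. -/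
lemma pairω_Umat_mulVec {lam : ℝ} (hlam : lam ≠ 0)
    (heig : ((cfMatProd Ω m).map fun z : ℤ => (z : ℝ)).mulVec ![1, Ω] = lam • ![1, Ω])
    (v : Fin 2 → ℤ) : pairω Ω (Umat Ω m *ᵥ v) = (-1) ^ m / lam * pairω Ω v := by
  have ha : (cfMatProd Ω m 0 0 : ℝ) + cfMatProd Ω m 0 1 * Ω = lam := by
    simpa [Matrix.mulVec, dotProduct, Fin.sum_univ_two] using congrFun heig 0
  have hc : (cfMatProd Ω m 1 0 : ℝ) + cfMatProd Ω m 1 1 * Ω = lam * Ω := by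
    simpa [Matrix.mulVec, dotProduct, Fin.sum_univ_two] using congrFun heig 1
  have hdet : (cfMatProd Ω m 0 0 : ℝ) * cfMatProd Ω m 1 1
      - cfMatProd Ω m 0 1 * cfMatProd Ω m 1 0 = (-1) ^ m := by
    have h : (cfMatProd Ω m).det = (-1) ^ m := det_cfMatProd
    rw [Matrix.det_fin_two] at h
    exact_mod_cast h
  rw [div_mul_eq_mul_div, eq_div_iff hlam]
  simp only [pairω, Umat_eq, Matrix.mulVec, dotProduct, Fin.sum_univ_two, Matrix.of_apply,
    Matrix.cons_val', Matrix.cons_val_zero, Matrix.cons_val_one, Matrix.empty_val',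
    Matrix.cons_val_fin_one]
  push_cast
  linear_combination ((v 0 : ℝ) + v 1 * Ω) * hdet
    - ((v 0 : ℝ) * cfMatProd Ω m 1 1 - v 1 * cfMatProd Ω m 1 0) * ha
    - (-(v 0 : ℝ) * cfMatProd Ω m 0 1 + v 1 * cfMatProd Ω m 0 0) * hc


lemma pairω_sres {lam : ℝ} (hlam : lam ≠ 0)
    (heig : ((cfMatProd Ω m).map fun z : ℤ => (z : ℝ)).mulVec ![1, Ω] = lam • ![1, Ω])
    (q : ℤ) (n : ℕ) :
    pairω Ω (sres Ω (Umat Ω m) q n) = ((-1) ^ m / lam) ^ n * (q * Ω - p0 Ω q) := by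
  induction n with
  | zero =>
    simp only [pairω, sres, pow_zero, kzero, Matrix.one_mulVec, Matrix.cons_val_zero,
      Matrix.cons_val_one, Matrix.cons_val_fin_one, Int.cast_neg, one_mul]
    ring
  | succ n ih => rw [sres_succ, pairω_Umat_mulVec hlam heig, ih, pow_succ]; ring

lemma abs_pairω_sres {lam : ℝ} (hlam : 0 < lam)
    (heig : ((cfMatProd Ω m).map fun z : ℤ => (z : ℝ)).mulVec ![1, Ω] = lam • ![1, Ω])
    (q : ℤ) (n : ℕ) :
    |pairω Ω (sres Ω (Umat Ω m) q n)| = |q * Ω - p0 Ω q| / lam ^ n := by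
  rw [pairω_sres hlam.ne' heig, abs_mul, abs_pow, abs_div, abs_pow, abs_neg, abs_one, one_pow,
    abs_of_pos hlam, div_pow, one_pow, one_div_mul_eq_div]

lemma pairω_injective (hirr : Irrational Ω) : Function.Injective (pairω Ω) := by
  intro k k' h
  have hsum : ((k 0 - k' 0 : ℤ) : ℝ) + ((k 1 - k' 1 : ℤ) : ℝ) * Ω = 0 := by
    simp only [pairω] at h
    push_cast
    linarith
  have h1 : k 1 - k' 1 = 0 := by
    by_contra hne
    exact (hirr.intCast_mul hne).ne_int (-(k 0 - k' 0)) (by rw [Int.cast_neg]; linarith)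
  rw [h1, Int.cast_zero, zero_mul, add_zero, Int.cast_eq_zero] at hsum
  funext i
  fin_cases i <;> simp only [Fin.zero_eta, Fin.mk_one, Fin.isValue] <;> omega

lemma eq_of_abs_pairω_eq (hirr : Irrational Ω) {k k' : Fin 2 → ℤ} (hk : 0 < k 1)
    (hk' : 0 < k' 1) (h : |pairω Ω k| = |pairω Ω k'|) : k = k' := by
  rcases abs_eq_abs.mp h with h | h
  · exact pairω_injective hirr h
  · have hneg : pairω Ω k = pairω Ω (-k') := by
      rw [h]; simp only [pairω, Pi.neg_apply, Int.cast_neg]; ring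
    have := congrFun (pairω_injective hirr hneg) 1
    simp only [Pi.neg_apply] at this
    omega


lemma KqD_pos (hirr : Irrational Ω) (h0 : 0 < Ω) (h1 : Ω < 1) (hm : 1 ≤ m) {q : ℤ}
    (hq : 1 ≤ q) : 0 < KqD Ω m q := by
  obtain ⟨-, e01, e10, -⟩ := cfMatProd_entries hirr h0 h1 hm
  have hp : (0 : ℝ) ≤ p0 Ω q := by exact_mod_cast p0_nonneg h0 (by omega)
  have hq' : (1 : ℝ) ≤ q := by exact_mod_cast hq
  have hb : (0 : ℝ) ≤ cfMatProd Ω m 0 1 := by exact_mod_cast (zero_le_one.trans e01)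
  have hc : (1 : ℝ) ≤ cfMatProd Ω m 1 0 := by exact_mod_cast e10
  have hnum : 0 < (cfMatProd Ω m 1 0 : ℝ) * q + cfMatProd Ω m 0 1 * p0 Ω q * Ω := by
    have := mul_nonneg (mul_nonneg hb hp) h0.le
    nlinarith
  have hden : 0 < (cfMatProd Ω m 1 0 : ℝ) + cfMatProd Ω m 0 1 * Ω ^ 2 := by
    have := mul_nonneg hb (sq_nonneg Ω)
    linarith
  rw [KqD, abs_of_pos hnum, abs_of_pos hden]
  positivity

lemma gammaStarQ_pos (hirr : Irrational Ω) (h0 : 0 < Ω) (h1 : Ω < 1) (hm : 1 ≤ m) {q : ℤ}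
    (hq : 1 ≤ q) : 0 < gammaStarQ Ω m q := by
  have hr : (q : ℝ) * Ω - p0 Ω q ≠ 0 :=
    sub_ne_zero.mpr ((hirr.intCast_mul (by omega)).ne_int _)
  exact mul_pos (abs_pos.mpr hr) (KqD_pos hirr h0 h1 hm hq)

lemma tgam_pos (hirr : Irrational Ω) (h0 : 0 < Ω) (h1 : Ω < 1) (hm : 1 ≤ m) {qh q : ℤ}
    (hqh : 1 ≤ qh) (hq : 1 ≤ q) : 0 < tgam Ω m qh q :=
  div_pos (gammaStarQ_pos hirr h0 h1 hm hq) (gammaStarQ_pos hirr h0 h1 hm hqh)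

lemma D0_pos (hirr : Irrational Ω) (h0 : 0 < Ω) (h1 : Ω < 1) (hm : 1 ≤ m) {ρ : ℝ}
    (hρ : ρ ≠ 0) {qh : ℤ} (hqh : 1 ≤ qh) : 0 < D0 Ω m ρ qh := by
  have := gammaStarQ_pos hirr h0 h1 hm hqh
  unfold D0
  positivity

lemma epsStar_pos (hirr : Irrational Ω) (h0 : 0 < Ω) (h1 : Ω < 1) (hm : 1 ≤ m) {ρ lam : ℝ}
    (hρ : ρ ≠ 0) (hlam : 0 < lam) {qh q : ℤ} (hqh : 1 ≤ qh) (hq : 1 ≤ q) (n : ℕ) :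
    0 < epsStar Ω m ρ lam qh q n := by
  have := D0_pos hirr h0 h1 hm hρ hqh
  have := tgam_pos hirr h0 h1 hm hqh hq
  have := KqD_pos hirr h0 h1 hm hq
  unfold epsStar
  positivity

lemma abs_pairω_sres_eq_gammaStarQ_div {lam : ℝ} (hlam : 0 < lam)
    (heig : ((cfMatProd Ω m).map fun z : ℤ => (z : ℝ)).mulVec ![1, Ω] = lam • ![1, Ω])
    {q : ℤ} (hK : KqD Ω m q ≠ 0) (n : ℕ) :
    |pairω Ω (sres Ω (Umat Ω m) q n)| = gammaStarQ Ω m q / (KqD Ω m q * lam ^ n) := by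
  rw [abs_pairω_sres hlam heig, gammaStarQ, mul_comm (KqD Ω m q), mul_div_mul_right _ _ hK]

lemma sres_eq_of_epsStar_eq_of_tgam_eq (hirr : Irrational Ω) (h0 : 0 < Ω) (h1 : Ω < 1)
    (hm : 1 ≤ m) {ρ lam : ℝ} (hρ : ρ ≠ 0) (hlam : 0 < lam)
    (heig : ((cfMatProd Ω m).map fun z : ℤ => (z : ℝ)).mulVec ![1, Ω] = lam • ![1, Ω])
    {qh q qb : ℤ} (hqh : 1 ≤ qh) (hq : 1 ≤ q) (hqb : 1 ≤ qb) {n nb : ℕ}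
    (hε : epsStar Ω m ρ lam qh q n = epsStar Ω m ρ lam qh qb nb)
    (hγ : tgam Ω m qh q = tgam Ω m qh qb) :
    sres Ω (Umat Ω m) q n = sres Ω (Umat Ω m) qb nb := by
  have hK := KqD_pos hirr h0 h1 hm hq
  have hKb := KqD_pos hirr h0 h1 hm hqb
  have hγq : gammaStarQ Ω m q = gammaStarQ Ω m qb :=
    (div_left_inj' (gammaStarQ_pos hirr h0 h1 hm hqh).ne').mp hγ
  have hscale : KqD Ω m q * lam ^ n = KqD Ω m qb * lam ^ nb := by
    have hnum : D0 Ω m ρ qh * tgam Ω m qh qb ^ 2 ≠ 0 := by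
      have := D0_pos hirr h0 h1 hm hρ hqh
      have := tgam_pos hirr h0 h1 hm hqh hqb
      positivity
    have h4 : KqD Ω m q ^ 4 * lam ^ (4 * n) = KqD Ω m qb ^ 4 * lam ^ (4 * nb) := by
      rw [epsStar, epsStar, hγ, div_eq_mul_inv, div_eq_mul_inv] at hε
      exact inv_inj.mp (mul_left_cancel₀ hnum hε)
    refine (pow_left_inj₀ (by positivity) (by positivity) four_ne_zero).mp ?_
    rwa [mul_pow, mul_pow, ← pow_mul, ← pow_mul, mul_comm n, mul_comm nb]
  refine eq_of_abs_pairω_eq hirr (sres_signs hirr h0 h1 hm hq n).2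
    (sres_signs hirr h0 h1 hm hqb nb).2 ?_
  rw [abs_pairω_sres_eq_gammaStarQ_div hlam heig hK.ne',
    abs_pairω_sres_eq_gammaStarQ_div hlam heig hKb.ne', hγq, hscale]

end QuasiResonances

theorem splitting_quadratic_stmt12_general
    (Ω : ℝ) (m : ℕ) (hm : 1 ≤ m) (h0 : 0 < Ω) (h1 : Ω < 1)
    (hquad : IsQuadraticIrrational Ω)
    (lam : ℝ) (hlam : 1 < lam)
    (heig : ((cfMatProd Ω m).map fun z : ℤ => (z : ℝ)).mulVec ![1, Ω] = lam • ![1, Ω])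
    (ρ : ℝ) (hρ : 0 < ρ)
    (qh : ℤ) (hqh : PrimitiveInt Ω (Umat Ω m) qh)
    (q qb : ℤ) (n nb : ℕ)
    (hq : PrimitiveInt Ω (Umat Ω m) q) (hqb : PrimitiveInt Ω (Umat Ω m) qb)
    (hne : sres Ω (Umat Ω m) q n ≠ sres Ω (Umat Ω m) qb nb)
    (hWle : tgam Ω m qh q ≤ tgam Ω m qh qb)
    (Z W : ℝ)
    (hZ : Z = (epsStar Ω m ρ lam qh qb nb / epsStar Ω m ρ lam qh q n) ^ ((1 : ℝ) / 4))
    (hW : W = Real.sqrt (tgam Ω m qh qb / tgam Ω m qh q)) :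
    (¬∀ ε : ℝ, 0 < ε →
        gstarF Ω m ρ lam qh q n ε = gstarF Ω m ρ lam qh qb nb ε) ∧
    (∀ ε₁ ε₂ : ℝ, 0 < ε₁ → 0 < ε₂ →
        gstarF Ω m ρ lam qh q n ε₁ = gstarF Ω m ρ lam qh qb nb ε₁ →
        gstarF Ω m ρ lam qh q n ε₂ = gstarF Ω m ρ lam qh qb nb ε₂ → ε₁ = ε₂) ∧
    ((∃ ε : ℝ, 0 < ε ∧
        gstarF Ω m ρ lam qh q n ε = gstarF Ω m ρ lam qh qb nb ε) ↔
      (Z < 1 / W ∨ W < Z)) ∧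
    (∀ ε : ℝ, 0 < ε →
        gstarF Ω m ρ lam qh q n ε = gstarF Ω m ρ lam qh qb nb ε →
      ε = epsStar Ω m ρ lam qh q n * (Z * (W * Z - 1) / (Z - W)) ^ 2 ∧
      deriv (gstarF Ω m ρ lam qh q n) ε ≠ deriv (gstarF Ω m ρ lam qh qb nb) ε) := by
  have hirr := hquad.1
  have hlam0 : 0 < lam := by linarith
  have hX := epsStar_pos hirr h0 h1 hm hρ.ne' hlam0 hqh.1 hq.1 n
  have hXb := epsStar_pos hirr h0 h1 hm hρ.ne' hlam0 hqh.1 hqb.1 nb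
  have hY := tgam_pos hirr h0 h1 hm hqh.1 hq.1
  have hZ0 : 0 < Z := hZ ▸ Real.rpow_pos_of_pos (div_pos hXb hX) _
  have hW1 : 1 ≤ W := hW ▸ Real.one_le_sqrt.mpr ((one_le_div hY).mpr hWle)
  have hXb_eq : epsStar Ω m ρ lam qh qb nb = epsStar Ω m ρ lam qh q n * Z ^ 4 :=
    hZ ▸ eq_mul_rpow_quarter_pow_four hX hXb.le
  have hYb_eq : tgam Ω m qh qb = tgam Ω m qh q * W ^ 2 :=
    hW ▸ eq_mul_sqrt_div_sq hY (hY.le.trans hWle)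
  have hZW : ¬(Z = 1 ∧ W = 1) := by
    rintro ⟨rfl, rfl⟩
    exact hne (sres_eq_of_epsStar_eq_of_tgam_eq hirr h0 h1 hm hρ.ne' hlam0 heig hqh.1 hq.1 hqb.1
      (by rw [hXb_eq, one_pow, mul_one]) (by rw [hYb_eq, one_pow, mul_one]))
  unfold gstarF
  rw [hXb_eq, hYb_eq]
  have hloc := fun ε (hε : 0 < ε) h => eq_of_Gfun_eq_Gfun hε hX hY hZ0 (by linarith) hZW h
  exact ⟨fun hall => (by norm_num : (1 : ℝ) ≠ 2) ((hloc 1 one_pos (hall 1 one_pos)).trans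
      (hloc 2 two_pos (hall 2 two_pos)).symm),
    fun ε₁ ε₂ h₁ h₂ e₁ e₂ => (hloc ε₁ h₁ e₁).trans (hloc ε₂ h₂ e₂).symm,
    exists_Gfun_eq_Gfun_iff hX hY hZ0 hW1 hZW,
    fun ε hε h =>
      ⟨hloc ε hε h, deriv_Gfun_ne_of_Gfun_eq hε hX hY hZ0 (by linarith) hZW h⟩⟩

/-- Lemma 5 (lm:ZW): for two distinct quasi-resonances `k = s(q,n)`, `k̄ = s(q̄,n̄)` with
`γ̃*_q ≤ γ̃*_{q̄}`, setting `Z = (ε*_{k̄}/ε*_k)^{1/4}` and `W = (γ̃*_{q̄}/γ̃*_q)^{1/2}`,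
the graphs of `g*_k` and `g*_{k̄}` are not identical, they coincide at no more than one
point `ε > 0`, a coincidence point exists iff `Z < 1/W` or `Z > W`, and in that case it
is unique, transverse, and located at `ε = ε*_k (Z(WZ−1)/(Z−W))²`. -/
theorem splitting_quadratic_stmt12
    (Ω : ℝ) (m : ℕ) (hm : 1 ≤ m) (h0 : 0 < Ω) (h1 : Ω < 1)
    (hquad : IsQuadraticIrrational Ω)
    (hper : gaussOrbit Ω m = Ω)
    (lam : ℝ) (hlam : 1 < lam)
    (heig : ((cfMatProd Ω m).map fun z : ℤ => (z : ℝ)).mulVec ![1, Ω] = lam • ![1, Ω])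
    (ρ : ℝ) (hρ : 0 < ρ)
    (qh : ℤ) (hqh : PrimitiveInt Ω (Umat Ω m) qh)
    (hmin : ∀ q' : ℤ, PrimitiveInt Ω (Umat Ω m) q' →
      gammaStarQ Ω m qh ≤ gammaStarQ Ω m q')
    (q qb : ℤ) (n nb : ℕ)
    (hq : PrimitiveInt Ω (Umat Ω m) q) (hqb : PrimitiveInt Ω (Umat Ω m) qb)
    (hne : sres Ω (Umat Ω m) q n ≠ sres Ω (Umat Ω m) qb nb)
    (hWle : tgam Ω m qh q ≤ tgam Ω m qh qb)
    (Z W : ℝ)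
    (hZ : Z = (epsStar Ω m ρ lam qh qb nb / epsStar Ω m ρ lam qh q n) ^ ((1 : ℝ) / 4))
    (hW : W = Real.sqrt (tgam Ω m qh qb / tgam Ω m qh q)) :
    (¬∀ ε : ℝ, 0 < ε →
        gstarF Ω m ρ lam qh q n ε = gstarF Ω m ρ lam qh qb nb ε) ∧
    (∀ ε₁ ε₂ : ℝ, 0 < ε₁ → 0 < ε₂ →
        gstarF Ω m ρ lam qh q n ε₁ = gstarF Ω m ρ lam qh qb nb ε₁ →
        gstarF Ω m ρ lam qh q n ε₂ = gstarF Ω m ρ lam qh qb nb ε₂ → ε₁ = ε₂) ∧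
    ((∃ ε : ℝ, 0 < ε ∧
        gstarF Ω m ρ lam qh q n ε = gstarF Ω m ρ lam qh qb nb ε) ↔
      (Z < 1 / W ∨ W < Z)) ∧
    (∀ ε : ℝ, 0 < ε →
        gstarF Ω m ρ lam qh q n ε = gstarF Ω m ρ lam qh qb nb ε →
      ε = epsStar Ω m ρ lam qh q n * (Z * (W * Z - 1) / (Z - W)) ^ 2 ∧
      deriv (gstarF Ω m ρ lam qh q n) ε ≠ deriv (gstarF Ω m ρ lam qh qb nb) ε) :=
  splitting_quadratic_stmt12_general Ω m hm h0 h1 hquad lam hlam heig ρ hρ qh hqh q qb n nb hq hqb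
    hne hWle Z W hZ hW
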